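/- arXiv:2410.07007 — 2 statements merged into one kernel-verified Lean document; each statement's English description precedes it below -/
import Mathlib

section
/- With P_n(x) = det(M_n(x)) as above, for all n > 1: x^{2n−2} = P_{n−1}(x)² − P_n(x)·P_{n−2}(x). -/
open Matrix Polynomial

noncomputable def Mmat (n : ℕ) (x : ℂ) : Matrix (Fin n) (Fin n) ℂ :=
  Matrix.of fun i j =>
    if (i : ℕ) = (j : ℕ) then 1
    else if (i : ℕ) + 1 = (j : ℕ) ∨ (j : ℕ) + 1 = (i : ℕ) then x else 0

noncomputable def P (n : ℕ) (x : ℂ) : ℂ := (Mmat n x).det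

/-
Expanding the determinant along the first row gives the recurrence `P (n + 2) = P (n + 1) - x² P n`.
For any sequence with `f (n + 2) = b f (n + 1) - c f n`, the Cassini-type quantity
`f (n + 1)² - f (n + 2) f n` is multiplied by `c` at each step; here `c = x²` and the initial value
is `P 1² - P 2 P 0 = x²`.
-/

theorem Matrix.det_eq_sub_of_row_zero_col_zero_vanish {R : Type*} [CommRing R] {n : ℕ}
    (A : Matrix (Fin (n + 2)) (Fin (n + 2)) R)
    (hrow : ∀ j : Fin n, A 0 j.succ.succ = 0) (hcol : ∀ i : Fin n, A i.succ.succ 0 = 0) :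
    A.det = A 0 0 * (A.submatrix Fin.succ Fin.succ).det
      - A 0 1 * A 1 0 * ((A.submatrix Fin.succ Fin.succ).submatrix Fin.succ Fin.succ).det := by
  have hminor : (A.submatrix Fin.succ (Fin.succAbove 1)).det
      = A 1 0 * ((A.submatrix Fin.succ Fin.succ).submatrix Fin.succ Fin.succ).det := by
    rw [det_succ_column_zero, Fin.sum_univ_succ]
    simp [hcol, Fin.one_succAbove_succ, submatrix_submatrix, Function.comp_def]
  rw [det_succ_row_zero, Fin.sum_univ_succ, Fin.sum_univ_succ]
  simp only [hrow, mul_zero, zero_mul, Finset.sum_const_zero, add_zero, Fin.succAbove_zero,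
    Fin.succ_zero_eq_one, hminor, Fin.val_zero, Fin.val_one, pow_zero, pow_one]
  ring

theorem Mmat_submatrix_succ (n : ℕ) (x : ℂ) :
    (Mmat (n + 1) x).submatrix Fin.succ Fin.succ = Mmat n x := by
  ext i j
  simp [Mmat]

theorem P_zero (x : ℂ) : P 0 x = 1 := det_fin_zero

theorem P_one (x : ℂ) : P 1 x = 1 := by
  simp [P, Mmat]

theorem P_add_two (n : ℕ) (x : ℂ) : P (n + 2) x = P (n + 1) x - x ^ 2 * P n x := by
  rw [P, det_eq_sub_of_row_zero_col_zero_vanish, Mmat_submatrix_succ, Mmat_submatrix_succ]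
  · have h00 : Mmat (n + 2) x 0 0 = 1 := by simp [Mmat]
    have h01 : Mmat (n + 2) x 0 1 = x := by simp [Mmat]
    have h10 : Mmat (n + 2) x 1 0 = x := by simp [Mmat]
    rw [h00, h01, h10, P, P]
    ring
  all_goals intro k; simp [Mmat]

theorem sq_sub_mul_eq_pow_mul_of_linear_recurrence {R : Type*} [CommRing R] (f : ℕ → R) (b c : R)
    (hf : ∀ n, f (n + 2) = b * f (n + 1) - c * f n) (n : ℕ) :
    f (n + 1) ^ 2 - f (n + 2) * f n = c ^ n * (f 1 ^ 2 - f 2 * f 0) := by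
  induction n with
  | zero => simp
  | succ n ih =>
    calc f (n + 2) ^ 2 - f (n + 3) * f (n + 1)
        = c * (f (n + 1) ^ 2 - f (n + 2) * f n) := by
          rw [hf (n + 1), hf n]; ring
      _ = c ^ (n + 1) * (f 1 ^ 2 - f 2 * f 0) := by rw [ih]; ring

theorem P_catalan_like (n : ℕ) (hn : 1 < n) (x : ℂ) :
    x ^ (2 * n - 2) = P (n - 1) x ^ 2 - P n x * P (n - 2) x := by
  obtain ⟨m, rfl⟩ : ∃ m, n = m + 2 := ⟨n - 2, by omega⟩
  have hcassini := sq_sub_mul_eq_pow_mul_of_linear_recurrence (fun k => P k x) 1 (x ^ 2)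
    (fun k => by rw [one_mul, P_add_two]) m
  have hinit : P 1 x ^ 2 - P 2 x * P 0 x = x ^ 2 := by
    rw [P_add_two 0, P_zero, P_one]
    ring
  rw [show 2 * (m + 2) - 2 = 2 * m + 2 by omega, show m + 2 - 1 = m + 1 by omega,
    Nat.add_sub_cancel, hcassini, hinit]
  ring
end

section
/- Let n = 2m+1 be odd with m ≥ 2. Then the polynomial P_{m−1}(x) + x·P_{m−2}(x) has exactly m−1 distinct complex roots (it divides P_{2m−2}(x), which has 2m−2 distinct roots, and the factor P_{m−1}(x) − x·P_{m−2}(x) has the remaining m−1). -/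
open Matrix Polynomial

noncomputable def MmatP (n : ℕ) : Matrix (Fin n) (Fin n) (Polynomial ℂ) :=
  Matrix.of fun i j =>
    if (i : ℕ) = (j : ℕ) then 1
    else if (i : ℕ) + 1 = (j : ℕ) ∨ (j : ℕ) + 1 = (i : ℕ) then Polynomial.X else 0

noncomputable def Ppoly (n : ℕ) : Polynomial ℂ := (MmatP n).det



lemma Ppoly_zero : Ppoly 0 = 1 := by
  simp [Ppoly, Matrix.det_fin_zero]

lemma Ppoly_one : Ppoly 1 = 1 := by
  simp [Ppoly, Matrix.det_fin_one, MmatP]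

lemma MmatP_minor (n : ℕ) : (MmatP (n+1)).submatrix Fin.succ Fin.succ = MmatP n := by
  ext i j
  simp only [MmatP, Matrix.submatrix_apply, Matrix.of_apply, Fin.val_succ]
  split_ifs <;> first | rfl | omega | (casesm* _ ∨ _ <;> omega) | simp_all

lemma hsigma (n : ℕ) (j : Fin n) : (1 : Fin (n+2)).succAbove j.succ = j.succ.succ := by
  rw [Fin.succAbove_of_le_castSucc]
  rw [Fin.le_def]
  simp

lemma hsigma0 (n : ℕ) : (1 : Fin (n+2)).succAbove 0 = 0 := by
  rw [Fin.succAbove_of_castSucc_lt] <;> simp [Fin.lt_def]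

lemma M1_det (n : ℕ) :
    ((MmatP (n+2)).submatrix Fin.succ (Fin.succAbove 1)).det = X * Ppoly n := by
  have hminor :
      ((MmatP (n+2)).submatrix (Fin.succ ∘ Fin.succ) (Fin.succAbove 1 ∘ Fin.succ))
        = MmatP n := by
    ext i j
    simp only [Matrix.submatrix_apply, Function.comp_apply, hsigma]
    simp only [MmatP, Matrix.of_apply, Fin.val_succ]
    split_ifs <;> first | rfl | omega | (casesm* _ ∨ _ <;> omega) | simp_all
  have hcol : ∀ i : Fin (n+1),
      (MmatP (n+2)).submatrix Fin.succ (Fin.succAbove 1) i 0 =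
        if (i : ℕ) = 0 then X else 0 := by
    intro i
    simp only [Matrix.submatrix_apply, hsigma0]
    simp only [MmatP, Matrix.of_apply, Fin.val_succ, Fin.val_zero]
    split_ifs <;> first | rfl | omega | (casesm* _ ∨ _ <;> omega) | simp_all
  rw [Matrix.det_succ_column_zero, Fin.sum_univ_succ]
  simp only [hcol, Fin.val_succ, Fin.val_zero, if_true, Nat.succ_ne_zero, if_false,
    mul_zero, zero_mul, Finset.sum_const_zero, add_zero]
  norm_num
  rw [hminor]
  rfl

lemma Ppoly_rec (n : ℕ) : Ppoly (n+2) = Ppoly (n+1) - X^2 * Ppoly n := by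
  rw [Ppoly, Matrix.det_succ_row_zero, Fin.sum_univ_succ, Fin.sum_univ_succ]
  have e1 : ((MmatP (n+2)).submatrix Fin.succ Fin.succ).det = Ppoly (n+1) :=
    congrArg Matrix.det (MmatP_minor (n+1))
  have e2 := M1_det n
  simp only [MmatP, Matrix.of_apply, Fin.val_zero, Fin.val_succ] at e1 e2 ⊢
  norm_num
  rw [e1, e2]
  ring

lemma Ppoly_prod : ∀ b a : ℕ,
    Ppoly (a+b+2) = Ppoly (a+1) * Ppoly (b+1) - X^2 * Ppoly a * Ppoly b := by
  intro b
  induction b with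
  | zero =>
    intro a
    rw [Ppoly_rec a, Ppoly_one, Ppoly_zero]
    ring
  | succ b ih =>
    intro a
    have key : Ppoly (a + (b+1) + 2)
        = Ppoly (a+2) * Ppoly (b+1) - X^2 * Ppoly (a+1) * Ppoly b := by
      rw [show a + (b+1) + 2 = a + 1 + b + 2 by omega]
      exact ih (a+1)
    show Ppoly (a + (b+1) + 2) = Ppoly (a+1) * Ppoly (b+2) - X^2 * Ppoly a * Ppoly (b+1)
    rw [key, Ppoly_rec a, Ppoly_rec b]
    ring

lemma Ppoly_deg (n : ℕ) : (Ppoly n).natDegree ≤ n := by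
  have H : ∀ n, (Ppoly n).natDegree ≤ n ∧ (Ppoly (n+1)).natDegree ≤ n+1 := by
    intro n
    induction n with
    | zero => constructor <;> simp [Ppoly_zero, Ppoly_one]
    | succ n ih =>
      refine ⟨ih.2, ?_⟩
      show (Ppoly (n+2)).natDegree ≤ n+2
      rw [Ppoly_rec]
      refine le_trans (Polynomial.natDegree_sub_le _ _) ?_
      rw [max_le_iff]
      refine ⟨le_trans ih.2 (by omega), ?_⟩
      refine le_trans (Polynomial.natDegree_mul_le) ?_
      have h1 : (X^2 : Polynomial ℂ).natDegree = 2 := Polynomial.natDegree_X_pow 2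
      have h2 := ih.1
      rw [h1]
      omega
  exact (H n).1

lemma Ppoly_eval_zero (n : ℕ) : (Ppoly n).eval 0 = 1 := by
  have H : ∀ n, (Ppoly n).eval 0 = 1 ∧ (Ppoly (n+1)).eval 0 = 1 := by
    intro n
    induction n with
    | zero => constructor <;> simp [Ppoly_zero, Ppoly_one]
    | succ n ih =>
      refine ⟨ih.2, ?_⟩
      show (Ppoly (n+2)).eval 0 = 1
      rw [Ppoly_rec]
      simp [ih.1, ih.2]
  exact (H n).1

lemma Ppoly_closed (θ x : ℂ) (hx : 2 * Complex.cos θ * x = 1) :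
    ∀ n : ℕ, Complex.sin θ * ((2 * Complex.cos θ)^n * (Ppoly n).eval x)
      = Complex.sin (((n : ℂ)+1) * θ) := by
  have key : ∀ n : ℕ, Complex.sin (((n:ℂ)+3)*θ)
      = 2*Complex.cos θ * Complex.sin (((n:ℂ)+2)*θ) - Complex.sin (((n:ℂ)+1)*θ) := by
    intro n
    have h1 : ((n:ℂ)+3)*θ = ((n:ℂ)+2)*θ + θ := by ring
    have h3 : ((n:ℂ)+1)*θ = ((n:ℂ)+2)*θ - θ := by ring
    rw [h1, h3, Complex.sin_add, Complex.sin_sub]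
    ring
  have H : ∀ n : ℕ,
      (Complex.sin θ * ((2 * Complex.cos θ)^n * (Ppoly n).eval x)
        = Complex.sin (((n : ℂ)+1) * θ)) ∧
      (Complex.sin θ * ((2 * Complex.cos θ)^(n+1) * (Ppoly (n+1)).eval x)
        = Complex.sin (((n : ℂ)+2) * θ)) := by
    intro n
    induction n with
    | zero =>
      constructor
      · rw [Ppoly_zero]
        norm_num
      · rw [Ppoly_one]
        simp only [eval_one, mul_one, pow_one]
        push_cast
        rw [show ((0:ℂ)+2)*θ = θ + θ by ring, Complex.sin_add]
        ring
    | succ n ih =>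
      constructor
      · have h := ih.2
        push_cast
        rw [show ((n:ℂ)+1+1) = (n:ℂ)+2 by ring]
        exact h
      push_cast
      rw [show ((n:ℂ)+1+2) = (n:ℂ)+3 by ring]
      show Complex.sin θ * ((2 * Complex.cos θ)^(n+2) * (Ppoly (n+2)).eval x)
        = Complex.sin (((n:ℂ)+3) * θ)
      rw [Ppoly_rec]
      simp only [eval_sub, eval_mul, eval_pow, eval_X]
      have hx2 : (2*Complex.cos θ)^(n+2) * x^2 = (2*Complex.cos θ)^n := by
        have h : (2*Complex.cos θ*x)^2 = 1 := by rw [hx]; ring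
        calc (2*Complex.cos θ)^(n+2) * x^2
            = (2*Complex.cos θ)^n * ((2*Complex.cos θ*x)^2) := by ring
          _ = (2*Complex.cos θ)^n := by rw [h]; ring
      have e : Complex.sin θ * ((2 * Complex.cos θ)^(n+2) *
            ((Ppoly (n+1)).eval x - x^2 * (Ppoly n).eval x))
          = 2*Complex.cos θ * (Complex.sin θ * ((2 * Complex.cos θ)^(n+1) * (Ppoly (n+1)).eval x))
            - Complex.sin θ * ((2*Complex.cos θ)^(n+2) * x^2 * (Ppoly n).eval x) := by
        ring
      rw [e, hx2, ih.2, ih.1, key n]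
  exact fun n => (H n).1

theorem odd_factor_roots (m : ℕ) (hm : 2 ≤ m) :
    (Ppoly (m - 1) + Polynomial.X * Ppoly (m - 2)) ∣ Ppoly (2 * m - 2) ∧
    (Ppoly (m - 1) + Polynomial.X * Ppoly (m - 2)).roots.toFinset.card = m - 1 := by
  obtain ⟨k, rfl⟩ : ∃ k, m = k + 2 := ⟨m - 2, by omega⟩
  rw [show k + 2 - 1 = k + 1 by omega, show k + 2 - 2 = k by omega,
      show 2 * (k + 2) - 2 = k + k + 2 by omega]
  set f : Polynomial ℂ := Ppoly (k+1) + X * Ppoly k with hf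
  have hsplit : Ppoly (k+k+2) = (Ppoly (k+1) - X * Ppoly k) * f := by
    rw [Ppoly_prod k k, hf]; ring
  have hdvd : f ∣ Ppoly (k+k+2) := ⟨Ppoly (k+1) - X * Ppoly k, by rw [hsplit]; ring⟩
  refine ⟨hdvd, ?_⟩
  have hf0 : f.eval 0 = 1 := by simp [hf, Ppoly_eval_zero]
  have hfne : f ≠ 0 := by intro h; rw [h] at hf0; simp at hf0
  have hdeg : f.natDegree ≤ k + 1 := by
    refine le_trans (Polynomial.natDegree_add_le _ _) ?_
    rw [max_le_iff]
    refine ⟨Ppoly_deg (k+1), ?_⟩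
    refine le_trans (Polynomial.natDegree_mul_le) ?_
    have h1 := Ppoly_deg k
    have hX : (X : Polynomial ℂ).natDegree = 1 := Polynomial.natDegree_X
    omega
  set N : ℕ := 2*k + 3 with hN
  have hNpos : (0:ℝ) < (N:ℝ) := by positivity
  have hNval : ((N:ℝ)) = 2*(k:ℝ)+3 := by rw [hN]; push_cast; ring
  set r : ℕ → ℝ := fun j => 2 * Real.pi * j / N with hr
  have hmem : ∀ j, 1 ≤ j → j ≤ k+1 → 0 < r j ∧ r j < Real.pi := by
    intro j h1 h2
    have hj : (1:ℝ) ≤ (j:ℝ) := by exact_mod_cast h1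
    have hj2 : (j:ℝ) ≤ (k:ℝ)+1 := by exact_mod_cast h2
    have hπ := Real.pi_pos
    constructor
    · apply div_pos (by nlinarith) hNpos
    · rw [div_lt_iff₀ hNpos]
      nlinarith
  have hcos : ∀ j, 1 ≤ j → j ≤ k+1 → Real.cos (r j) ≠ 0 := by
    intro j h1 h2 hc
    rw [Real.cos_eq_zero_iff] at hc
    obtain ⟨t, ht⟩ := hc
    have hπ : Real.pi ≠ 0 := Real.pi_ne_zero
    have hN0 : (N:ℝ) ≠ 0 := ne_of_gt hNpos
    have h' : 2*Real.pi*(j:ℝ) = (2*(t:ℝ)+1)*Real.pi/2 * N := by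
      have := (div_eq_iff hN0).mp ht
      linarith [this]
    have h2' : (4*(j:ℝ)) * Real.pi = ((2*(t:ℝ)+1)*(N:ℝ)) * Real.pi := by
      linear_combination 2*h'
    have h3 : (4*(j:ℝ)) = (2*(t:ℝ)+1)*(N:ℝ) := mul_right_cancel₀ hπ h2'
    rw [hNval] at h3
    have h4 : (4*(j:ℤ)) = (2*t+1)*(2*(k:ℤ)+3) := by exact_mod_cast h3
    have hodd : Odd ((2*t+1)*(2*(k:ℤ)+3)) := ⟨2*t*k+3*t+k+1, by ring⟩
    rw [← h4] at hodd
    exact (Int.not_odd_iff_even.mpr ⟨2*(j:ℤ), by ring⟩) hodd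
  have hsin : ∀ j, 1 ≤ j → j ≤ k+1 → Real.sin (r j) ≠ 0 := by
    intro j h1 h2
    have h := hmem j h1 h2
    exact ne_of_gt (Real.sin_pos_of_pos_of_lt_pi h.1 h.2)
  set xc : ℕ → ℂ := fun j => ((1/(2*Real.cos (r j)) : ℝ) : ℂ) with hxc
  have heval : ∀ j, 1 ≤ j → j ≤ k+1 → f.eval (xc j) = 0 := by
    intro j h1 h2
    have hc := hcos j h1 h2
    have hs := hsin j h1 h2
    set θ : ℂ := ((r j : ℝ) : ℂ) with hθ
    have hcosc : Complex.cos θ = ((Real.cos (r j) : ℝ) : ℂ) := (Complex.ofReal_cos _).symm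
    have hsinc : Complex.sin θ = ((Real.sin (r j) : ℝ) : ℂ) := (Complex.ofReal_sin _).symm
    have hxeq : 2 * Complex.cos θ * (xc j) = 1 := by
      rw [hcosc, hxc]
      have hreal : (2 * Real.cos (r j) * (1/(2*Real.cos (r j))) : ℝ) = 1 := by
        field_simp
      calc (2 * ((Real.cos (r j) : ℝ):ℂ) * ((1/(2*Real.cos (r j)) : ℝ) : ℂ))
          = (((2 * Real.cos (r j) * (1/(2*Real.cos (r j))) : ℝ)) : ℂ) := by push_cast; ring
        _ = 1 := by rw [hreal]; norm_num
    have A1 := Ppoly_closed θ (xc j) hxeq (k+1)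
    have A0 := Ppoly_closed θ (xc j) hxeq k
    have hNr : (2*(k:ℝ)+3) * r j = (j:ℝ) * (2*Real.pi) := by
      rw [hr]
      rw [← hNval]
      field_simp
    have hreal : Real.sin (((k:ℝ)+2) * r j) + Real.sin (((k:ℝ)+1) * r j) = 0 := by
      have harg : ((k:ℝ)+2) * r j = (j:ℝ) * (2*Real.pi) - ((k:ℝ)+1) * r j := by
        linear_combination hNr
      have hs0 : Real.sin ((j:ℝ)*(2*Real.pi)) = 0 := by
        have h := Real.sin_int_mul_pi (2*(j:ℤ))
        have e : ((2*(j:ℤ) : ℤ):ℝ) * Real.pi = (j:ℝ)*(2*Real.pi) := by push_cast; ring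
        rw [e] at h; exact h
      have hc1 : Real.cos ((j:ℝ)*(2*Real.pi)) = 1 := by
        have h := Real.cos_int_mul_two_pi (j:ℤ)
        have e : ((j:ℤ):ℝ) * (2*Real.pi) = (j:ℝ)*(2*Real.pi) := by push_cast; ring
        rw [e] at h; exact h
      rw [harg, Real.sin_sub, hs0, hc1]
      ring
    have hsum : Complex.sin (((k:ℂ)+2)*θ) + Complex.sin (((k:ℂ)+1)*θ) = 0 := by
      have e1 : ((k:ℂ)+2)*θ = ((((k:ℝ)+2) * r j : ℝ) : ℂ) := by rw [hθ]; push_cast; ring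
      have e2 : ((k:ℂ)+1)*θ = ((((k:ℝ)+1) * r j : ℝ) : ℂ) := by rw [hθ]; push_cast; ring
      rw [e1, e2, ← Complex.ofReal_sin, ← Complex.ofReal_sin]
      exact_mod_cast hreal
    have hmain : Complex.sin θ * ((2*Complex.cos θ)^(k+1) * f.eval (xc j)) = 0 := by
      rw [hf]
      simp only [eval_add, eval_mul, eval_X]
      have expand : Complex.sin θ * ((2*Complex.cos θ)^(k+1) *
            ((Ppoly (k+1)).eval (xc j) + xc j * (Ppoly k).eval (xc j)))
          = Complex.sin θ * ((2*Complex.cos θ)^(k+1) * (Ppoly (k+1)).eval (xc j))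
            + (2*Complex.cos θ*(xc j)) *
              (Complex.sin θ * ((2*Complex.cos θ)^k * (Ppoly k).eval (xc j))) := by ring
      rw [expand, A1, A0, hxeq, one_mul]
      have ecast : ((((k:ℕ)+1 : ℕ) : ℂ)+1) = ((k:ℂ)+2) := by push_cast; ring
      rw [ecast]
      exact hsum
    have hsne : Complex.sin θ ≠ 0 := by
      rw [hsinc]
      exact_mod_cast hs
    have hcne : ((2*Complex.cos θ)^(k+1) : ℂ) ≠ 0 := by
      apply pow_ne_zero
      rw [hcosc]
      intro h
      apply hc
      have h2 : ((Real.cos (r j) : ℝ) : ℂ) = 0 := by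
        rcases mul_eq_zero.mp h with h' | h'
        · norm_num at h'
        · exact h'
      exact_mod_cast h2
    rcases mul_eq_zero.mp hmain with h | h
    · exact absurd h hsne
    rcases mul_eq_zero.mp h with h' | h'
    · exact absurd h' hcne
    exact h'
  set T : Finset ℂ := (Finset.Icc 1 (k+1)).image xc with hT
  have hTsub : T ⊆ f.roots.toFinset := by
    intro z hz
    rw [hT, Finset.mem_image] at hz
    obtain ⟨j, hj, rfl⟩ := hz
    rw [Finset.mem_Icc] at hj
    rw [Multiset.mem_toFinset, Polynomial.mem_roots hfne]
    exact heval j hj.1 hj.2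
  have hTcard : T.card = k+1 := by
    have hinj : Set.InjOn xc (Finset.Icc 1 (k+1)) := by
      intro a ha b hb hab
      simp only [Finset.coe_Icc, Set.mem_Icc] at ha hb
      have hca := hcos a ha.1 ha.2
      have hcb := hcos b hb.1 hb.2
      have hab' : ((1/(2*Real.cos (r a)) : ℝ) : ℂ) = ((1/(2*Real.cos (r b)) : ℝ) : ℂ) := hab
      have hreal : (1/(2*Real.cos (r a)) : ℝ) = 1/(2*Real.cos (r b)) := by
        exact_mod_cast hab'
      have hcc : Real.cos (r a) = Real.cos (r b) := by
        field_simp at hreal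
        linarith
      have hma := hmem a ha.1 ha.2
      have hmb := hmem b hb.1 hb.2
      have hra : r a = r b :=
        Real.injOn_cos ⟨le_of_lt hma.1, le_of_lt hma.2⟩ ⟨le_of_lt hmb.1, le_of_lt hmb.2⟩ hcc
      have hπ : Real.pi ≠ 0 := Real.pi_ne_zero
      have hN0 : (N:ℝ) ≠ 0 := ne_of_gt hNpos
      rw [hr] at hra
      field_simp at hra
      exact_mod_cast hra
    rw [hT, Finset.card_image_of_injOn hinj, Nat.card_Icc]
    omega
  have upper : f.roots.toFinset.card ≤ k+1 :=
    le_trans (Multiset.toFinset_card_le _) (le_trans (Polynomial.card_roots' f) hdeg)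
  have lower : k+1 ≤ f.roots.toFinset.card := by
    rw [← hTcard]
    exact Finset.card_le_card hTsub
  omega
end
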